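/- Let W = {ω_0, …, ω_{n-1}} be a basis of F_{q^n} over F_q and M_W its Moore matrix. Then det(M_W)^{q-1} = (-1)^{n-1}. In particular, if n is odd then det(M_W) ∈ F_q^*. -/

import Mathlib

/-!
The Frobenius `x ↦ x ^ q` maps the Moore matrix of a basis to itself with its columns cyclically
rotated, because `x ^ q ^ n = x` on `L`; hence `det ^ q = sign (n-cycle) * det`, which is
`(-1) ^ (n - 1) * det`. The determinant is nonzero: a kernel vector `c` would make `∑ⱼ cⱼ σʲ`
vanish on a basis, contradicting Dedekind's independence of the distinct embeddings `σʲ`, `j < n`.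
For odd `n` the determinant is thus fixed by the Frobenius, which generates `Gal(L/K)`, so it
lies in `K`.
-/

/-- The Moore matrix of `s : Fin n → L`, with `(i,j)` entry `s i ^ q ^ j`, `q = |K|`. -/
def mooreMatrix (K : Type*) [Field K] [Fintype K] {L : Type*} [Field L] {n : ℕ}
    (s : Fin n → L) : Matrix (Fin n) (Fin n) L :=
  Matrix.of fun i j => s i ^ Fintype.card K ^ (j : ℕ)

open FiniteField Module

lemma Fin.val_finRotate {n : ℕ} (j : Fin n) : (finRotate n j : ℕ) = (j + 1) % n := by
  obtain _ | n := n
  · exact j.elim0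
  · rw [coe_finRotate]
    split_ifs with h
    · simp [h]
    · have := Fin.val_lt_last h
      rw [Nat.mod_eq_of_lt (by omega)]

section

variable {K L : Type*} [Field K] [Fintype K] [Field L] [Algebra K L]

lemma mooreMatrix_apply_eq_frobeniusAlgHom_pow {n : ℕ} (s : Fin n → L) (i j : Fin n) :
    mooreMatrix K s i j = (frobeniusAlgHom K L ^ (j : ℕ)) (s i) := by
  rw [AlgHom.coe_pow, coe_frobeniusAlgHom, pow_iterate]
  rfl

variable [Finite L]

lemma map_frobeniusAlgHom_mooreMatrix {n : ℕ} (hn : finrank K L = n) (s : Fin n → L) :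
    (mooreMatrix K s).map (frobeniusAlgHom K L) =
      (mooreMatrix K s).submatrix id (finRotate n) := by
  rw [← orderOf_frobeniusAlgHom] at hn
  subst hn
  ext i j
  simp only [Matrix.map_apply, Matrix.submatrix_apply, id_eq,
    mooreMatrix_apply_eq_frobeniusAlgHom_pow, Fin.val_finRotate, pow_mod_orderOf]
  rw [← AlgHom.mul_apply, ← pow_succ']

lemma det_mooreMatrix_pow_card {n : ℕ} (hn : finrank K L = n) (s : Fin n → L) :
    (mooreMatrix K s).det ^ Fintype.card K = (-1) ^ (n - 1) * (mooreMatrix K s).det := by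
  have := (frobeniusAlgHom K L).map_det (mooreMatrix K s)
  rw [AlgHom.mapMatrix_apply, map_frobeniusAlgHom_mooreMatrix hn,
    Matrix.det_permute', sign_finRotate] at this
  simpa using this

variable (K L) in
lemma linearIndependent_frobeniusAlgHom_pow :
    LinearIndependent L fun j : Fin (finrank K L) ↦
      (frobeniusAlgHom K L ^ (j : ℕ)).toLinearMap :=
  (linearIndependent_algHom_toLinearMap K L L).comp _ (bijective_frobeniusAlgHom_pow K L).1

lemma det_mooreMatrix_ne_zero {n : ℕ} (b : Basis (Fin n) K L) : (mooreMatrix K b).det ≠ 0 := by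
  intro hdet
  obtain ⟨c, hc, hMc⟩ := Matrix.exists_mulVec_eq_zero_iff.mpr hdet
  have hn : finrank K L = n := by simp [finrank_eq_card_basis b]
  subst hn
  have hsum : ∑ j, c j • (frobeniusAlgHom K L ^ (j : ℕ)).toLinearMap = 0 := b.ext fun i ↦ by
    simpa [Matrix.mulVec, dotProduct, mooreMatrix_apply_eq_frobeniusAlgHom_pow, mul_comm]
      using congr_fun hMc i
  exact hc <| funext <|
    Fintype.linearIndependent_iff.mp (linearIndependent_frobeniusAlgHom_pow K L) c hsum

lemma det_mooreMatrix_pow_card_sub_one {n : ℕ} (b : Basis (Fin n) K L) :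
    (mooreMatrix K b).det ^ (Fintype.card K - 1) = (-1) ^ (n - 1) := by
  refine mul_right_cancel₀ (det_mooreMatrix_ne_zero b) ?_
  rw [← pow_succ, Nat.sub_add_cancel Fintype.card_pos,
    det_mooreMatrix_pow_card (by simp [finrank_eq_card_basis b])]

lemma mem_range_algebraMap_of_pow_card_eq_self {x : L} (hx : x ^ Fintype.card K = x) :
    x ∈ Set.range (algebraMap K L) := by
  rw [IsGalois.mem_range_algebraMap_iff_fixed]
  intro f
  obtain ⟨k, rfl⟩ := (bijective_frobeniusAlgEquivOfAlgebraic_pow K L).2 f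
  simp only [AlgEquiv.coe_pow, coe_frobeniusAlgEquivOfAlgebraic]
  exact Function.iterate_fixed hx _

lemma det_mooreMatrix_mem_range_algebraMap {n : ℕ} (hn : Odd n) (b : Basis (Fin n) K L) :
    (mooreMatrix K b).det ∈ Set.range (algebraMap K L) := by
  apply mem_range_algebraMap_of_pow_card_eq_self
  rw [det_mooreMatrix_pow_card (by simp [finrank_eq_card_basis b]),
    (Nat.Odd.sub_odd hn odd_one).neg_one_pow, one_mul]

end

theorem stmt7_general (K L : Type*) [Field K] [Fintype K] [Field L] [Algebra K L]
    (n : ℕ) (ω : Fin n → L) (hω : ∃ b : Module.Basis (Fin n) K L, ∀ i, b i = ω i) :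
    (mooreMatrix K ω).det ^ (Fintype.card K - 1) = (-1 : L) ^ (n - 1) ∧
      (Odd n → (mooreMatrix K ω).det ∈ Set.range (algebraMap K L) ∧ (mooreMatrix K ω).det ≠ 0) := by
  obtain ⟨b, hb⟩ := hω
  obtain rfl : ⇑b = ω := funext hb
  have : Module.Finite K L := .of_basis b
  have : Finite L := Module.finite_of_finite K
  exact ⟨det_mooreMatrix_pow_card_sub_one b,
    fun hn ↦ ⟨det_mooreMatrix_mem_range_algebraMap hn b, det_mooreMatrix_ne_zero b⟩⟩

theorem stmt7 (K L : Type*) [Field K] [Fintype K] [Field L] [Fintype L] [Algebra K L]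
    (n : ℕ) (ω : Fin n → L) (hω : ∃ b : Module.Basis (Fin n) K L, ∀ i, b i = ω i) :
    (mooreMatrix K ω).det ^ (Fintype.card K - 1) = (-1 : L) ^ (n - 1) ∧
      (Odd n → (mooreMatrix K ω).det ∈ Set.range (algebraMap K L) ∧ (mooreMatrix K ω).det ≠ 0) :=
  stmt7_general K L n ω hω
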